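/- Let τ₁, τ₂ ∈ ℍ ∪ (ℝ\ℤ) and let τ₃ lie on the hyperbolic geodesic segment between τ₁ and τ₂. Then d_ℤ(τ₁,τ₂) = d_ℤ(τ₁,τ₃) + d_ℤ(τ₃,τ₂). Consequently, every hyperbolic geodesic is, after reparametrization, also a geodesic for d_ℤ, and the metric space (ℍ ∪ (ℝ\ℤ), d_ℤ) is a geodesic space. -/

import Mathlib

noncomputable def dZ (τ₁ τ₂ : ℂ) : ℝ :=
  ⨆ s₁ : ℤ, ⨆ s₂ : ℤ,
    Real.log ((‖τ₁ - (s₂ : ℂ)‖ * ‖τ₂ - (s₁ : ℂ)‖) /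
      (‖τ₂ - (s₂ : ℂ)‖ * ‖τ₁ - (s₁ : ℂ)‖))

/-- Membership in `ℍ ∪ (ℝ \ ℤ)`. -/
def memHZ (τ : ℂ) : Prop :=
  0 < τ.im ∨ (τ.im = 0 ∧ ∀ n : ℤ, τ.re ≠ (n : ℝ))

/-- `τ₃` lies on the hyperbolic geodesic segment between `τ₁` and `τ₂`:
either all three points lie on a common vertical line, with `τ₃` between
`τ₁` and `τ₂`, or they lie on a common semicircle orthogonal to `ℝ`, with
the real part of `τ₃` between those of `τ₁` and `τ₂`. -/
def OnGeodSeg (τ₁ τ₂ τ₃ : ℂ) : Prop :=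
  (τ₁.re = τ₂.re ∧ τ₃.re = τ₁.re ∧ τ₃.im ∈ Set.uIcc τ₁.im τ₂.im) ∨
  (∃ c r : ℝ, 0 < r ∧ ‖τ₁ - (c : ℂ)‖ = r ∧
    ‖τ₂ - (c : ℂ)‖ = r ∧ ‖τ₃ - (c : ℂ)‖ = r ∧
    τ₃.re ∈ Set.uIcc τ₁.re τ₂.re)

open Set Filter Topology

/-!
For `τ, τ'` off `ℤ` the double supremum splits as `dZ τ τ' = sup_s L τ τ' s + sup_s L τ' τ s`
with `L τ τ' s = log ‖τ - s‖ - log ‖τ' - s‖`. Along a hyperbolic geodesic there is a real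
coordinate `y` (`Im τ ^ 2` on the vertical line `Re τ = x`, `2 (Re τ - c)` on the circle of centre
`c` and radius `r`) in which every `‖τ - s‖ ^ 2 = A s - y * B s` is affine. Comparing
cross-ratios, `L τ τ' s` is monotone in `B s / A s`, so both suprema are attained at integers
independent of the two points (the minimiser and maximiser of `B s / A s`; on the vertical line
the second supremum is the limit `0` as `s → ∞`). Hence `dZ τ τ' = |Φ y - Φ y'|` for an explicit
continuous, strictly increasing potential `Φ`: additivity along the segment follows, and choosing
`y(t)` with `Φ (y t)` affine in `t` (intermediate value theorem) gives the constant-speed geodesic.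
-/

lemma memHZ_iff {τ : ℂ} : memHZ τ ↔ 0 ≤ τ.im ∧ ∀ s : ℤ, τ ≠ s := by
  constructor
  · rintro (h | ⟨h, hre⟩)
    · exact ⟨h.le, fun s hs => by simp [hs] at h⟩
    · exact ⟨h.ge, fun s hs => hre s (by simp [hs])⟩
  · rintro ⟨him, hne⟩
    rcases him.lt_or_eq with h | h
    · exact Or.inl h
    · exact Or.inr ⟨h.symm, fun s hs =>
        hne s (Complex.ext (by simpa using hs) (by simpa using h.symm))⟩

lemma memHZ.norm_sub_pos {τ : ℂ} (h : memHZ τ) (s : ℤ) : 0 < ‖τ - s‖ :=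
  norm_pos_iff.2 (sub_ne_zero.2 ((memHZ_iff.1 h).2 s))

noncomputable def logRatio (τ τ' : ℂ) (s : ℤ) : ℝ :=
  Real.log ‖τ - s‖ - Real.log ‖τ' - s‖

lemma dZ_eq_add_of_isLUB {τ τ' : ℂ} {M M' : ℝ} (h : memHZ τ) (h' : memHZ τ')
    (hM : IsLUB (range (logRatio τ τ')) M) (hM' : IsLUB (range (logRatio τ' τ)) M') :
    dZ τ τ' = M + M' := by
  have hterm : ∀ s₁ s₂ : ℤ, Real.log ((‖τ - s₂‖ * ‖τ' - s₁‖) / (‖τ' - s₂‖ * ‖τ - s₁‖)) =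
      logRatio τ τ' s₂ + logRatio τ' τ s₁ := by
    intro s₁ s₂
    have h₁ := h.norm_sub_pos s₁
    have h₂ := h.norm_sub_pos s₂
    have h₁' := h'.norm_sub_pos s₁
    have h₂' := h'.norm_sub_pos s₂
    rw [Real.log_div (mul_pos h₂ h₁').ne' (mul_pos h₂' h₁).ne', Real.log_mul h₂.ne' h₁'.ne',
      Real.log_mul h₂'.ne' h₁.ne', logRatio, logRatio]
    ring
  simp_rw [dZ, hterm, ← ciSup_add hM.bddAbove, hM.ciSup_eq, ← add_ciSup hM'.bddAbove, hM'.ciSup_eq]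

lemma exists_forall_le_of_tendsto_cofinite {α β : Type*} [LinearOrder β] [TopologicalSpace β]
    [OrderTopology β] {f : α → β} {b : β} (hf : Tendsto f cofinite (𝓝 b)) {t₀ : α}
    (ht₀ : f t₀ < b) : ∃ p, ∀ t, f p ≤ f t := by
  have hfin : {t | f t ≤ f t₀}.Finite := by
    simpa only [not_lt] using eventually_cofinite.1 (hf.eventually (lt_mem_nhds ht₀))
  obtain ⟨p, hp, hmin⟩ := exists_min_image _ f hfin ⟨t₀, le_rfl⟩
  refine ⟨p, fun t => ?_⟩
  rcases le_total (f t) (f t₀) with ht | ht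
  · exact hmin t ht
  · exact le_trans hp ht

lemma tendsto_div_sq_add_sq_cofinite (c r : ℝ) :
    Tendsto (fun s : ℤ => ((s : ℝ) - c) / (((s : ℝ) - c) ^ 2 + r ^ 2)) cofinite (𝓝 0) := by
  have hnorm : Tendsto (fun s : ℤ => ‖(s : ℝ) - c‖) cofinite atTop := by
    refine tendsto_atTop_mono (fun s => ?_) (tendsto_atTop_add_const_right _ (-‖c‖)
      (tendsto_norm_cocompact_atTop.comp Int.tendsto_coe_cofinite))
    have := norm_sub_norm_le (s : ℝ) c
    simp only [Function.comp_apply]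
    linarith
  refine squeeze_zero_norm (fun s => ?_) hnorm.inv_tendsto_atTop
  show ‖((s : ℝ) - c) / (((s : ℝ) - c) ^ 2 + r ^ 2)‖ ≤ ‖(s : ℝ) - c‖⁻¹
  rcases eq_or_ne ((s : ℝ) - c) 0 with hu | hu
  · simp [hu]
  have hpos : 0 < ((s : ℝ) - c) ^ 2 + r ^ 2 := by positivity
  rw [norm_div, Real.norm_of_nonneg hpos.le, Real.norm_eq_abs, inv_eq_one_div,
    div_le_div_iff₀ hpos (abs_pos.2 hu)]
  nlinarith [sq_abs ((s : ℝ) - c), sq_nonneg r]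

lemma log_sub_log_le_log_sub_log {a b a' b' y y' : ℝ} (h₁ : 0 < a - y * b) (h₂ : 0 < a - y' * b)
    (h₃ : 0 < a' - y * b') (h₄ : 0 < a' - y' * b') (h : 0 ≤ (y - y') * (a * b' - a' * b)) :
    Real.log (a' - y * b') - Real.log (a' - y' * b') ≤
      Real.log (a - y * b) - Real.log (a - y' * b) := by
  rw [sub_le_sub_iff, ← Real.log_mul h₃.ne' h₂.ne', ← Real.log_mul h₁.ne' h₄.ne']
  exact Real.log_le_log (by positivity) (by linarith)

lemma sub_mul_pos_of_mem_uIcc {a b y₁ y₂ y : ℝ} (h₁ : 0 < a - y₁ * b) (h₂ : 0 < a - y₂ * b)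
    (hy : y ∈ uIcc y₁ y₂) : 0 < a - y * b := by
  rcases mem_uIcc.1 hy with ⟨h, h'⟩ | ⟨h, h'⟩ <;> rcases le_total b 0 with hb | hb <;> nlinarith

def IsAffineCoord (A B : ℤ → ℝ) (z : ℂ) (y : ℝ) : Prop :=
  ∀ s : ℤ, Complex.normSq (z - s) = A s - y * B s

namespace IsAffineCoord

variable {A B : ℤ → ℝ} {z z' : ℂ} {y y' : ℝ}

lemma pos (hz : IsAffineCoord A B z y) (h : memHZ z) (s : ℤ) : 0 < A s - y * B s :=
  hz s ▸ Complex.normSq_pos.2 (sub_ne_zero.2 ((memHZ_iff.1 h).2 s))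

lemma logRatio_eq (hz : IsAffineCoord A B z y) (hz' : IsAffineCoord A B z' y') (s : ℤ) :
    logRatio z z' s = (Real.log (A s - y * B s) - Real.log (A s - y' * B s)) / 2 := by
  rw [logRatio, Complex.norm_def, Complex.norm_def, Real.log_sqrt (Complex.normSq_nonneg _),
    Real.log_sqrt (Complex.normSq_nonneg _), hz s, hz' s]
  ring

lemma isGreatest_logRatio (hz : IsAffineCoord A B z y) (hz' : IsAffineCoord A B z' y')
    (h : memHZ z) (h' : memHZ z') {p : ℤ} (hp : ∀ s, 0 ≤ (y - y') * (A p * B s - A s * B p)) :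
    IsGreatest (range (logRatio z z')) (logRatio z z' p) := by
  refine ⟨mem_range_self p, forall_mem_range.2 fun s => ?_⟩
  rw [hz.logRatio_eq hz', hz.logRatio_eq hz']
  have := log_sub_log_le_log_sub_log (hz.pos h p) (hz'.pos h' p) (hz.pos h s) (hz'.pos h' s) (hp s)
  linarith

lemma memHZ_of_mem_uIcc (hz : IsAffineCoord A B z y) (him : 0 ≤ z.im) {z₁ z₂ : ℂ} {y₁ y₂ : ℝ}
    (hz₁ : IsAffineCoord A B z₁ y₁) (hz₂ : IsAffineCoord A B z₂ y₂) (h₁ : memHZ z₁) (h₂ : memHZ z₂)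
    (hy : y ∈ uIcc y₁ y₂) : memHZ z := by
  refine memHZ_iff.2 ⟨him, fun s hs => ?_⟩
  have := sub_mul_pos_of_mem_uIcc (hz₁.pos h₁ s) (hz₂.pos h₂ s) hy
  rw [← hz s, hs, sub_self, map_zero] at this
  exact lt_irrefl 0 this

end IsAffineCoord

noncomputable def potential (a b a' b' y : ℝ) : ℝ :=
  (Real.log (a - y * b) - Real.log (a' - y * b')) / 2

def potentialDomain (a b a' b' : ℝ) : Set ℝ := {y | 0 < a - y * b ∧ 0 < a' - y * b'}

lemma ordConnected_potentialDomain (a b a' b' : ℝ) : (potentialDomain a b a' b').OrdConnected :=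
  ⟨fun _ h₁ _ h₂ _ hy => ⟨sub_mul_pos_of_mem_uIcc h₁.1 h₂.1 (Icc_subset_uIcc hy),
    sub_mul_pos_of_mem_uIcc h₁.2 h₂.2 (Icc_subset_uIcc hy)⟩⟩

lemma strictMonoOn_potential {a b a' b' : ℝ} (hb : b < 0) (hb' : 0 ≤ b') :
    StrictMonoOn (potential a b a' b') (potentialDomain a b a' b') := by
  intro y hy y' hy' hlt
  have h₁ : Real.log (a - y * b) < Real.log (a - y' * b) := Real.log_lt_log hy.1 (by nlinarith)
  have h₂ : Real.log (a' - y' * b') ≤ Real.log (a' - y * b') :=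
    Real.log_le_log hy'.2 (by nlinarith)
  simp only [potential]
  linarith

lemma continuousOn_potential (a b a' b' : ℝ) :
    ContinuousOn (potential a b a' b') (potentialDomain a b a' b') := by
  unfold potential
  exact ((ContinuousOn.log (by fun_prop) fun y hy => hy.1.ne').sub
    (ContinuousOn.log (by fun_prop) fun y hy => hy.2.ne')).div_const 2

lemma abs_sub_eq_add_of_monotoneOn {Φ : ℝ → ℝ} {y₁ y₂ y₃ : ℝ} (hΦ : MonotoneOn Φ (uIcc y₁ y₂))
    (hy : y₃ ∈ uIcc y₁ y₂) : |Φ y₁ - Φ y₂| = |Φ y₁ - Φ y₃| + |Φ y₃ - Φ y₂| := by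
  have := dist_add_dist_of_mem_segment (segment_eq_uIcc (Φ y₁) (Φ y₂) ▸ hΦ.mapsTo_uIcc hy)
  simpa only [Real.dist_eq] using this.symm

def IsConstSpeedPath {X : Type*} (d : X → X → ℝ) (M : X → Prop) (x₁ x₂ : X) (γ : ℝ → X) : Prop :=
  γ 0 = x₁ ∧ γ 1 = x₂ ∧ (∀ t ∈ Icc (0 : ℝ) 1, M (γ t)) ∧
    ∀ s ∈ Icc (0 : ℝ) 1, ∀ t ∈ Icc (0 : ℝ) 1, d (γ s) (γ t) = |s - t| * d x₁ x₂

lemma exists_isConstSpeedPath {X : Type*} (d : X → X → ℝ) (M : X → Prop) (P : ℝ → X) {Φ : ℝ → ℝ}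
    {y₁ y₂ : ℝ} (hc : ContinuousOn Φ (uIcc y₁ y₂)) (hinj : InjOn Φ (uIcc y₁ y₂))
    (hM : ∀ y ∈ uIcc y₁ y₂, M (P y))
    (hd : ∀ y ∈ uIcc y₁ y₂, ∀ y' ∈ uIcc y₁ y₂, d (P y) (P y') = |Φ y - Φ y'|) :
    ∃ γ, IsConstSpeedPath d M (P y₁) (P y₂) γ := by
  have hlevel : ∀ t, ∃ y ∈ uIcc y₁ y₂, t ∈ Icc (0 : ℝ) 1 → Φ y = (1 - t) * Φ y₁ + t * Φ y₂ := by
    intro t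
    by_cases ht : t ∈ Icc (0 : ℝ) 1
    · have hmem : (1 - t) * Φ y₁ + t * Φ y₂ ∈ uIcc (Φ y₁) (Φ y₂) := by
        rw [← segment_eq_uIcc]
        exact ⟨1 - t, t, by linarith [ht.2], ht.1, by ring, by simp only [smul_eq_mul]⟩
      obtain ⟨y, hy, hΦy⟩ := intermediate_value_uIcc hc hmem
      exact ⟨y, hy, fun _ => hΦy⟩
    · exact ⟨y₁, left_mem_uIcc, fun h => absurd h ht⟩
  choose y hy hΦy using hlevel
  have hy₀ : y 0 = y₁ := hinj (hy 0) left_mem_uIcc (by rw [hΦy 0 ⟨le_rfl, zero_le_one⟩]; ring)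
  have hy₁ : y 1 = y₂ := hinj (hy 1) right_mem_uIcc (by rw [hΦy 1 ⟨zero_le_one, le_rfl⟩]; ring)
  refine ⟨P ∘ y, by simp [hy₀], by simp [hy₁], fun t _ => hM _ (hy t), fun s hs t ht => ?_⟩
  rw [Function.comp_apply, Function.comp_apply, hd _ (hy s) _ (hy t), hΦy s hs, hΦy t ht,
    hd _ left_mem_uIcc _ right_mem_uIcc, abs_sub_comm (Φ y₁), ← abs_mul]
  congr 1
  ring

section Vertical

variable {x : ℝ} {z z' : ℂ}

lemma isAffineCoord_vertical (hz : z.re = x) :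
    IsAffineCoord (fun s : ℤ => ((s : ℝ) - x) ^ 2) (fun _ => -1) z (z.im ^ 2) := by
  intro s
  simp only [Complex.normSq_apply, Complex.sub_re, Complex.sub_im, Complex.intCast_re,
    Complex.intCast_im, sub_zero, hz]
  ring

-- The second supremum is `0`, approached as `s → ∞`; it contributes the constant `log 1`.
noncomputable def verticalPotential (x : ℝ) : ℝ → ℝ :=
  potential (((round x : ℝ) - x) ^ 2) (-1) 1 0

lemma strictMonoOn_verticalPotential (x : ℝ) :
    StrictMonoOn (verticalPotential x) (potentialDomain (((round x : ℝ) - x) ^ 2) (-1) 1 0) :=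
  strictMonoOn_potential (by norm_num) le_rfl

lemma mem_potentialDomain_vertical (h : memHZ z) (hz : z.re = x) :
    z.im ^ 2 ∈ potentialDomain (((round x : ℝ) - x) ^ 2) (-1) 1 0 :=
  ⟨(isAffineCoord_vertical hz).pos h (round x), by norm_num⟩

lemma tendsto_logRatio_vertical (hre : z'.re = z.re) : Tendsto (logRatio z' z) atTop (𝓝 0) := by
  have hA : Tendsto (fun s : ℤ => ((s : ℝ) - z.re) ^ 2) atTop atTop := by
    refine (tendsto_pow_atTop two_ne_zero).comp ?_
    simpa only [sub_eq_add_neg] using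
      tendsto_atTop_add_const_right _ (-z.re) tendsto_intCast_atTop_atTop
  have hlim := (((Real.tendsto_log_comp_add_sub_log (z'.im ^ 2)).sub
    (Real.tendsto_log_comp_add_sub_log (z.im ^ 2))).comp hA).div_const 2
  rw [sub_zero, zero_div] at hlim
  refine hlim.congr fun s => ?_
  rw [(isAffineCoord_vertical hre).logRatio_eq (isAffineCoord_vertical rfl)]
  simp only [Function.comp_apply]
  ring_nf

lemma isLUB_logRatio_vertical (h' : memHZ z') (hre : z'.re = z.re) (him : z'.im ≤ z.im) :
    IsLUB (range (logRatio z' z)) 0 := by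
  refine ⟨forall_mem_range.2 fun s => ?_, fun b hb =>
    le_of_tendsto' (tendsto_logRatio_vertical hre) fun s => hb (mem_range_self s)⟩
  have hz' := isAffineCoord_vertical hre
  rw [hz'.logRatio_eq (isAffineCoord_vertical rfl)]
  have hsq : z'.im ^ 2 ≤ z.im ^ 2 := pow_le_pow_left₀ (memHZ_iff.1 h').1 him 2
  have := Real.log_le_log (hz'.pos h' s) (by linarith : _ ≤ ((s : ℝ) - z.re) ^ 2 - z.im ^ 2 * -1)
  linarith

lemma dZ_vertical_of_im_le (h : memHZ z) (h' : memHZ z') (hre : z'.re = z.re)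
    (him : z'.im ≤ z.im) :
    dZ z z' = verticalPotential z.re (z.im ^ 2) - verticalPotential z.re (z'.im ^ 2) ∧
      dZ z' z = verticalPotential z.re (z.im ^ 2) - verticalPotential z.re (z'.im ^ 2) := by
  have hz := isAffineCoord_vertical (x := z.re) rfl
  have hz' := isAffineCoord_vertical hre
  have hsq : z'.im ^ 2 ≤ z.im ^ 2 := pow_le_pow_left₀ (memHZ_iff.1 h').1 him 2
  have hround : ∀ s : ℤ, ((round z.re : ℝ) - z.re) ^ 2 ≤ ((s : ℝ) - z.re) ^ 2 := fun s =>
    sq_le_sq.2 (by simpa only [abs_sub_comm _ z.re] using round_le z.re s)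
  have hmax := hz.isGreatest_logRatio hz' h h' (p := round z.re) fun s =>
    mul_nonneg (sub_nonneg.2 hsq) (by linarith [hround s])
  have hsup := isLUB_logRatio_vertical h' hre him
  have heq : logRatio z z' (round z.re) + 0 =
      verticalPotential z.re (z.im ^ 2) - verticalPotential z.re (z'.im ^ 2) := by
    simp only [hz.logRatio_eq hz', verticalPotential, potential]
    ring_nf
  exact ⟨(dZ_eq_add_of_isLUB h h' hmax.isLUB hsup).trans heq,
    (dZ_eq_add_of_isLUB h' h hsup hmax.isLUB).trans ((add_comm _ _).trans heq)⟩

lemma dZ_vertical (h : memHZ z) (h' : memHZ z') (hre : z'.re = z.re) :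
    dZ z z' = |verticalPotential z.re (z.im ^ 2) - verticalPotential z.re (z'.im ^ 2)| := by
  have hmono := (strictMonoOn_verticalPotential z.re).monotoneOn
  have hdom := mem_potentialDomain_vertical h rfl
  have hdom' := mem_potentialDomain_vertical h' hre
  rcases le_total z'.im z.im with him | him
  · rw [(dZ_vertical_of_im_le h h' hre him).1, abs_of_nonneg (sub_nonneg.2 (hmono hdom' hdom
      (pow_le_pow_left₀ (memHZ_iff.1 h').1 him 2)))]
  · rw [(dZ_vertical_of_im_le h' h hre.symm him).2, hre, abs_sub_comm,
      abs_of_nonneg (sub_nonneg.2 (hmono hdom hdom' (pow_le_pow_left₀ (memHZ_iff.1 h).1 him 2)))]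

lemma dZ_add_of_vertical {τ₁ τ₂ τ₃ : ℂ} (h₁ : memHZ τ₁) (h₂ : memHZ τ₂) (h₃ : memHZ τ₃)
    (hre : τ₁.re = τ₂.re) (hre₃ : τ₃.re = τ₁.re) (him : τ₃.im ∈ uIcc τ₁.im τ₂.im) :
    dZ τ₁ τ₂ = dZ τ₁ τ₃ + dZ τ₃ τ₂ := by
  rw [dZ_vertical h₁ h₂ hre.symm, dZ_vertical h₁ h₃ hre₃, dZ_vertical h₃ h₂ (hre₃ ▸ hre).symm,
    hre₃]
  have hsq : MonotoneOn (fun t : ℝ => t ^ 2) (uIcc τ₁.im τ₂.im) := pow_left_monotoneOn.mono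
    (ordConnected_Ici.uIcc_subset (memHZ_iff.1 h₁).1 (memHZ_iff.1 h₂).1)
  exact abs_sub_eq_add_of_monotoneOn ((strictMonoOn_verticalPotential _).monotoneOn.mono
    ((ordConnected_potentialDomain _ _ _ _).uIcc_subset (mem_potentialDomain_vertical h₁ rfl)
      (mem_potentialDomain_vertical h₂ hre.symm))) (hsq.mapsTo_uIcc him)

lemma exists_isConstSpeedPath_vertical {τ₁ τ₂ : ℂ} (h₁ : memHZ τ₁) (h₂ : memHZ τ₂)
    (hre : τ₁.re = τ₂.re) : ∃ γ, IsConstSpeedPath dZ memHZ τ₁ τ₂ γ := by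
  let P : ℝ → ℂ := fun y => ⟨τ₁.re, √y⟩
  have hP : ∀ y, 0 ≤ y → (P y).im ^ 2 = y := fun y hy => Real.sq_sqrt hy
  have hP₁ : P (τ₁.im ^ 2) = τ₁ := Complex.ext rfl (Real.sqrt_sq (memHZ_iff.1 h₁).1)
  have hP₂ : P (τ₂.im ^ 2) = τ₂ := Complex.ext hre (Real.sqrt_sq (memHZ_iff.1 h₂).1)
  have hnonneg : uIcc (τ₁.im ^ 2) (τ₂.im ^ 2) ⊆ Ici 0 :=
    ordConnected_Ici.uIcc_subset (sq_nonneg τ₁.im) (sq_nonneg τ₂.im)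
  have hdom := (ordConnected_potentialDomain _ _ _ _).uIcc_subset
    (mem_potentialDomain_vertical h₁ rfl) (mem_potentialDomain_vertical h₂ hre.symm)
  have hM : ∀ y ∈ uIcc (τ₁.im ^ 2) (τ₂.im ^ 2), memHZ (P y) := by
    intro y hy
    have hcoord := isAffineCoord_vertical (z := P y) rfl
    rw [hP y (hnonneg hy)] at hcoord
    exact hcoord.memHZ_of_mem_uIcc (Real.sqrt_nonneg _) (isAffineCoord_vertical (z := τ₁) rfl)
      (isAffineCoord_vertical hre.symm) h₁ h₂ hy
  rw [← hP₁, ← hP₂]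
  refine exists_isConstSpeedPath dZ memHZ P (Φ := verticalPotential τ₁.re)
    ((continuousOn_potential _ _ _ _).mono hdom)
    ((strictMonoOn_verticalPotential _).injOn.mono hdom) hM fun y hy y' hy' => ?_
  rw [dZ_vertical (hM y hy) (hM y' hy') rfl, hP y (hnonneg hy), hP y' (hnonneg hy')]

end Vertical

section Circle

variable {c r : ℝ} {z z' : ℂ}

lemma re_sub_sq_add_im_sq (hz : ‖z - c‖ = r) : (z.re - c) ^ 2 + z.im ^ 2 = r ^ 2 := by
  rw [← hz, Complex.sq_norm, Complex.normSq_apply]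
  simp only [Complex.sub_re, Complex.sub_im, Complex.ofReal_re, Complex.ofReal_im, sub_zero]
  ring

def circleA (c r : ℝ) (s : ℤ) : ℝ := ((s : ℝ) - c) ^ 2 + r ^ 2

def circleB (c : ℝ) (s : ℤ) : ℝ := (s : ℝ) - c

lemma isAffineCoord_circle (hz : ‖z - c‖ = r) :
    IsAffineCoord (circleA c r) (circleB c) z (2 * (z.re - c)) := by
  intro s
  simp only [Complex.normSq_apply, Complex.sub_re, Complex.sub_im, Complex.intCast_re,
    Complex.intCast_im, sub_zero, circleA, circleB]
  linear_combination re_sub_sq_add_im_sq hz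

/-- `p` and `q` minimise and maximise `(s - c) / ((s - c) ^ 2 + r ^ 2)` over `s : ℤ`. -/
def IsExtremalPair (c r : ℝ) (p q : ℤ) : Prop :=
  circleB c p < 0 ∧ 0 < circleB c q ∧ ∀ s : ℤ,
    circleA c r s * circleB c p ≤ circleA c r p * circleB c s ∧
      circleA c r q * circleB c s ≤ circleA c r s * circleB c q

lemma exists_isExtremalPair (c : ℝ) (hr : 0 < r) : ∃ p q : ℤ, IsExtremalPair c r p q := by
  have hA : ∀ s, 0 < circleA c r s := fun s => by unfold circleA; positivity
  let f : ℤ → ℝ := fun s => circleB c s / circleA c r s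
  have hf : Tendsto f cofinite (𝓝 0) := tendsto_div_sq_add_sq_cofinite c r
  have hneg : f (⌊c⌋ - 1) < 0 := div_neg_of_neg_of_pos
    (by simp only [circleB]; push_cast; linarith [Int.floor_le c]) (hA _)
  have hpos : -f (⌈c⌉ + 1) < -0 := neg_lt_neg (div_pos
    (by simp only [circleB]; push_cast; linarith [Int.le_ceil c]) (hA _))
  obtain ⟨p, hp⟩ := exists_forall_le_of_tendsto_cofinite hf hneg
  obtain ⟨q, hq⟩ := exists_forall_le_of_tendsto_cofinite hf.neg hpos
  refine ⟨p, q, ?_, ?_, fun s => ⟨?_, ?_⟩⟩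
  · simpa using (div_lt_iff₀ (hA p)).1 ((hp _).trans_lt hneg)
  · simpa using (lt_div_iff₀ (hA q)).1 (neg_lt_neg_iff.1 ((hq _).trans_lt hpos))
  · have := (div_le_div_iff₀ (hA p) (hA s)).1 (hp s)
    linarith
  · have := (div_le_div_iff₀ (hA s) (hA q)).1 (neg_le_neg_iff.1 (hq s))
    linarith

noncomputable def circlePotential (c r : ℝ) (p q : ℤ) : ℝ → ℝ :=
  potential (circleA c r p) (circleB c p) (circleA c r q) (circleB c q)

lemma IsExtremalPair.strictMonoOn_circlePotential {p q : ℤ} (hpq : IsExtremalPair c r p q) :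
    StrictMonoOn (circlePotential c r p q)
      (potentialDomain (circleA c r p) (circleB c p) (circleA c r q) (circleB c q)) :=
  strictMonoOn_potential hpq.1 hpq.2.1.le

lemma mem_potentialDomain_circle (h : memHZ z) (hz : ‖z - c‖ = r) (p q : ℤ) :
    2 * (z.re - c) ∈ potentialDomain (circleA c r p) (circleB c p) (circleA c r q) (circleB c q) :=
  ⟨(isAffineCoord_circle hz).pos h p, (isAffineCoord_circle hz).pos h q⟩

lemma dZ_circle_of_re_le {p q : ℤ} (hpq : IsExtremalPair c r p q) (h : memHZ z) (h' : memHZ z')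
    (hz : ‖z - c‖ = r) (hz' : ‖z' - c‖ = r) (hle : z'.re ≤ z.re) :
    dZ z z' = circlePotential c r p q (2 * (z.re - c)) - circlePotential c r p q (2 * (z'.re - c)) ∧
      dZ z' z = circlePotential c r p q (2 * (z.re - c)) -
        circlePotential c r p q (2 * (z'.re - c)) := by
  have hy := isAffineCoord_circle hz
  have hy' := isAffineCoord_circle hz'
  have hmaxp := hy.isGreatest_logRatio hy' h h' (p := p) fun s =>
    mul_nonneg (by linarith) (by linarith [(hpq.2.2 s).1])
  have hmaxq := hy'.isGreatest_logRatio hy h' h (p := q) fun s =>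
    mul_nonneg_of_nonpos_of_nonpos (by linarith) (by linarith [(hpq.2.2 s).2])
  have heq : logRatio z z' p + logRatio z' z q =
      circlePotential c r p q (2 * (z.re - c)) - circlePotential c r p q (2 * (z'.re - c)) := by
    rw [hy.logRatio_eq hy', hy'.logRatio_eq hy, circlePotential, potential, potential]
    ring
  exact ⟨(dZ_eq_add_of_isLUB h h' hmaxp.isLUB hmaxq.isLUB).trans heq,
    (dZ_eq_add_of_isLUB h' h hmaxq.isLUB hmaxp.isLUB).trans ((add_comm _ _).trans heq)⟩

lemma dZ_circle {p q : ℤ} (hpq : IsExtremalPair c r p q) (h : memHZ z) (h' : memHZ z')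
    (hz : ‖z - c‖ = r) (hz' : ‖z' - c‖ = r) :
    dZ z z' =
      |circlePotential c r p q (2 * (z.re - c)) - circlePotential c r p q (2 * (z'.re - c))| := by
  have hmono := hpq.strictMonoOn_circlePotential.monotoneOn
  have hdom := mem_potentialDomain_circle h hz p q
  have hdom' := mem_potentialDomain_circle h' hz' p q
  rcases le_total z'.re z.re with hle | hle
  · rw [(dZ_circle_of_re_le hpq h h' hz hz' hle).1,
      abs_of_nonneg (sub_nonneg.2 (hmono hdom' hdom (by linarith)))]
  · rw [(dZ_circle_of_re_le hpq h' h hz' hz hle).2, abs_sub_comm,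
      abs_of_nonneg (sub_nonneg.2 (hmono hdom hdom' (by linarith)))]

lemma dZ_add_of_circle {τ₁ τ₂ τ₃ : ℂ} (h₁ : memHZ τ₁) (h₂ : memHZ τ₂) (h₃ : memHZ τ₃)
    (hr : 0 < r) (hc₁ : ‖τ₁ - c‖ = r) (hc₂ : ‖τ₂ - c‖ = r) (hc₃ : ‖τ₃ - c‖ = r)
    (hre : τ₃.re ∈ uIcc τ₁.re τ₂.re) : dZ τ₁ τ₂ = dZ τ₁ τ₃ + dZ τ₃ τ₂ := by
  obtain ⟨p, q, hpq⟩ := exists_isExtremalPair c hr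
  rw [dZ_circle hpq h₁ h₂ hc₁ hc₂, dZ_circle hpq h₁ h₃ hc₁ hc₃, dZ_circle hpq h₃ h₂ hc₃ hc₂]
  have hcoord : Monotone fun t : ℝ => 2 * (t - c) := fun a b hab => by linarith
  exact abs_sub_eq_add_of_monotoneOn (hpq.strictMonoOn_circlePotential.monotoneOn.mono
    ((ordConnected_potentialDomain _ _ _ _).uIcc_subset (mem_potentialDomain_circle h₁ hc₁ p q)
      (mem_potentialDomain_circle h₂ hc₂ p q))) (hcoord.mapsTo_uIcc hre)

noncomputable def circlePoint (c r y : ℝ) : ℂ := ⟨c + y / 2, √(r ^ 2 - y ^ 2 / 4)⟩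

lemma two_mul_re_sub_mem_Icc (hr : 0 ≤ r) (hz : ‖z - c‖ = r) :
    2 * (z.re - c) ∈ Icc (-(2 * r)) (2 * r) := by
  have := abs_le_of_sq_le_sq' (a := z.re - c)
    (by nlinarith [re_sub_sq_add_im_sq hz, sq_nonneg z.im]) hr
  constructor <;> linarith [this.1, this.2]

lemma norm_circlePoint_sub {y : ℝ} (hr : 0 ≤ r) (hy : y ∈ Icc (-(2 * r)) (2 * r)) :
    ‖circlePoint c r y - c‖ = r := by
  have hns : Complex.normSq (circlePoint c r y - c) = r ^ 2 := by
    simp only [Complex.normSq_apply, Complex.sub_re, Complex.sub_im, Complex.ofReal_re,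
      Complex.ofReal_im, sub_zero, circlePoint]
    rw [Real.mul_self_sqrt (by nlinarith [hy.1, hy.2])]
    ring
  rw [Complex.norm_def, hns, Real.sqrt_sq hr]

lemma circlePoint_eq (hz : ‖z - c‖ = r) (him : 0 ≤ z.im) :
    circlePoint c r (2 * (z.re - c)) = z := by
  refine Complex.ext (by simp only [circlePoint]; ring) ?_
  simp only [circlePoint]
  rw [show r ^ 2 - (2 * (z.re - c)) ^ 2 / 4 = z.im ^ 2 by
    linear_combination -re_sub_sq_add_im_sq hz, Real.sqrt_sq him]

lemma exists_isConstSpeedPath_circle {τ₁ τ₂ : ℂ} (h₁ : memHZ τ₁) (h₂ : memHZ τ₂) (hr : 0 < r)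
    (hc₁ : ‖τ₁ - c‖ = r) (hc₂ : ‖τ₂ - c‖ = r) : ∃ γ, IsConstSpeedPath dZ memHZ τ₁ τ₂ γ := by
  obtain ⟨p, q, hpq⟩ := exists_isExtremalPair c hr
  have hcoord : ∀ y, 2 * ((circlePoint c r y).re - c) = y := fun y => by
    simp only [circlePoint]; ring
  have hIcc := uIcc_subset_Icc (two_mul_re_sub_mem_Icc hr.le hc₁)
    (two_mul_re_sub_mem_Icc hr.le hc₂)
  have hdom := (ordConnected_potentialDomain _ _ _ _).uIcc_subset
    (mem_potentialDomain_circle h₁ hc₁ p q) (mem_potentialDomain_circle h₂ hc₂ p q)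
  have hM : ∀ y ∈ uIcc (2 * (τ₁.re - c)) (2 * (τ₂.re - c)), memHZ (circlePoint c r y) := by
    intro y hy
    have hy' := isAffineCoord_circle (norm_circlePoint_sub (c := c) hr.le (hIcc hy))
    rw [hcoord] at hy'
    exact hy'.memHZ_of_mem_uIcc (Real.sqrt_nonneg _) (isAffineCoord_circle hc₁)
      (isAffineCoord_circle hc₂) h₁ h₂ hy
  rw [← circlePoint_eq hc₁ (memHZ_iff.1 h₁).1, ← circlePoint_eq hc₂ (memHZ_iff.1 h₂).1]
  refine exists_isConstSpeedPath dZ memHZ (circlePoint c r) (Φ := circlePotential c r p q)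
    ((continuousOn_potential _ _ _ _).mono hdom)
    (hpq.strictMonoOn_circlePotential.injOn.mono hdom) hM fun y hy y' hy' => ?_
  rw [dZ_circle hpq (hM y hy) (hM y' hy') (norm_circlePoint_sub hr.le (hIcc hy))
    (norm_circlePoint_sub hr.le (hIcc hy')), hcoord, hcoord]

end Circle

lemma exists_circle_through {τ₁ τ₂ : ℂ} (hre : τ₁.re ≠ τ₂.re) :
    ∃ c r : ℝ, 0 < r ∧ ‖τ₁ - c‖ = r ∧ ‖τ₂ - c‖ = r := by
  set c := (Complex.normSq τ₁ - Complex.normSq τ₂) / (2 * (τ₁.re - τ₂.re))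
  have hc : ‖τ₂ - c‖ = ‖τ₁ - c‖ := by
    have hden : τ₁.re - τ₂.re ≠ 0 := sub_ne_zero.2 hre
    rw [Complex.norm_def, Complex.norm_def]
    congr 1
    simp only [c, Complex.normSq_apply, Complex.sub_re, Complex.sub_im, Complex.ofReal_re,
      Complex.ofReal_im, sub_zero]
    field_simp
    ring
  refine ⟨c, ‖τ₁ - c‖, (norm_nonneg _).lt_of_ne fun h0 => hre ?_, rfl, hc⟩
  rw [sub_eq_zero.1 (norm_eq_zero.1 h0.symm), sub_eq_zero.1 (norm_eq_zero.1 (hc.trans h0.symm))]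

theorem stmt_12 :
    (∀ τ₁ τ₂ τ₃ : ℂ, memHZ τ₁ → memHZ τ₂ → memHZ τ₃ → OnGeodSeg τ₁ τ₂ τ₃ →
      dZ τ₁ τ₂ = dZ τ₁ τ₃ + dZ τ₃ τ₂) ∧
    (∀ τ₁ τ₂ : ℂ, memHZ τ₁ → memHZ τ₂ →
      ∃ γ : ℝ → ℂ, γ 0 = τ₁ ∧ γ 1 = τ₂ ∧
        (∀ t ∈ Set.Icc (0:ℝ) 1, memHZ (γ t)) ∧
        ∀ s ∈ Set.Icc (0:ℝ) 1, ∀ t ∈ Set.Icc (0:ℝ) 1,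
          dZ (γ s) (γ t) = |s - t| * dZ τ₁ τ₂) := by
  refine ⟨fun τ₁ τ₂ τ₃ h₁ h₂ h₃ hseg => ?_, fun τ₁ τ₂ h₁ h₂ => ?_⟩
  · rcases hseg with ⟨hre, hre₃, him⟩ | ⟨c, r, hr, hc₁, hc₂, hc₃, hre⟩
    · exact dZ_add_of_vertical h₁ h₂ h₃ hre hre₃ him
    · exact dZ_add_of_circle h₁ h₂ h₃ hr hc₁ hc₂ hc₃ hre
  · by_cases hre : τ₁.re = τ₂.re
    · exact exists_isConstSpeedPath_vertical h₁ h₂ hre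
    · obtain ⟨c, r, hr, hc₁, hc₂⟩ := exists_circle_through hre
      exact exists_isConstSpeedPath_circle h₁ h₂ hr hc₁ hc₂
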